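/- Under ‖h‖_{∞,Q} < ∞ and I_α(P‖Q) < ∞ for some α ∈ (1,2], the truncated likelihood ratio estimator with boundary τ_n satisfies, for all δ ∈ (0,1): with probability at least 1−δ, |h̄_n^{Tru} − E_P[h]| ≤ ‖h‖_{∞,Q} [ √(2 τ_n^{2−α} ln(2/δ) I_α(P‖Q) / n) + τ_n ln(2/δ)/(3n) + τ_n^{1−α} I_α(P‖Q) ]. -/

import Mathlib

open MeasureTheory ProbabilityTheory
open scoped Nat

noncomputable def lr {X : Type*} [MeasurableSpace X] (P Q : Measure X) (x : X) : ℝ :=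
  (P.rnDeriv Q x).toReal

noncomputable def Ialpha {X : Type*} [MeasurableSpace X] (P Q : Measure X) (α : ℝ) : ℝ :=
  ∫ x, lr P Q x ^ α ∂Q

/-!
The estimator is the empirical mean of i.i.d. copies of `Z = h · min(l, τ)`, and
`|Z| ≤ ‖h‖∞ τ`. The pointwise bounds `min(l, τ)² ≤ τ^(2-α) l^α` and
`l - min(l, τ) ≤ τ^(1-α) l^α` give `E_Q[Z²] ≤ ‖h‖∞² τ^(2-α) I_α` and
`|E_Q Z - E_P h| ≤ ‖h‖∞ τ^(1-α) I_α`. Bernstein's inequality (Chernoff's bound together with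
`exp w - 1 - w ≤ w² / (2 (1 - u/3))` for `|w| ≤ u < 3`) bounds the fluctuation of the empirical
mean by the first two terms with probability `1 - δ`; the bias is the third.
-/

theorem Real.exp_sub_one_sub_le_of_abs_le {w u : ℝ} (hwu : |w| ≤ u) (hu : u < 3) :
    Real.exp w - 1 - w ≤ w ^ 2 / (2 * (1 - u / 3)) := by
  have hu0 : 0 ≤ u := (abs_nonneg w).trans hwu
  have hexp : HasSum (fun k => w ^ (k + 2) / (k + 2)!) (Real.exp w - 1 - w) := by
    have h := (hasSum_nat_add_iff' 2).mpr (NormedSpace.expSeries_div_hasSum_exp w)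
    simpa [← Real.exp_eq_exp_ℝ, Finset.sum_range_succ, sub_sub] using h
  have hgeom : HasSum (fun k => w ^ 2 / 2 * (u / 3) ^ k) (w ^ 2 / (2 * (1 - u / 3))) := by
    have h := (hasSum_geometric_of_lt_one (r := u / 3) (by positivity) (by linarith)).mul_left
      (w ^ 2 / 2)
    rwa [← div_eq_mul_inv, div_div] at h
  refine hasSum_le (fun k => ?_) hexp hgeom
  have hpow : w ^ (k + 2) ≤ w ^ 2 * u ^ k := by
    have hwk : w ^ k ≤ u ^ k := calc
      w ^ k ≤ |w| ^ k := by rw [← abs_pow]; exact le_abs_self _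
      _ ≤ u ^ k := pow_le_pow_left₀ (abs_nonneg w) hwu k
    rw [pow_add, mul_comm]
    exact mul_le_mul_of_nonneg_left hwk (sq_nonneg w)
  have hfact : (2 * 3 ^ k : ℝ) ≤ (k + 2)! := by
    exact_mod_cast (add_comm k 2 ▸ Nat.factorial_mul_pow_le_factorial (m := 2) (n := k))
  calc w ^ (k + 2) / (k + 2)! ≤ w ^ 2 * u ^ k / (2 * 3 ^ k) := by
        gcongr
  _ = w ^ 2 / 2 * (u / 3) ^ k := by rw [div_pow]; ring

-- `s / (V + b s / 3)` with `s = √(2 V L)` is the Chernoff parameter that makes the Bernstein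
-- exponent `-t (s + b L / 3) + V t² / (2 (1 - t b / 3))` exactly `-L`.
lemma bernstein_exponent_eq {V b L s : ℝ} (hV : 0 < V) (hb : 0 ≤ b) (hs : 0 ≤ s)
    (hs2 : s ^ 2 = 2 * V * L) :
    -(s / (V + b * s / 3)) * (s + b * L / 3)
      + V * ((s / (V + b * s / 3)) ^ 2 / (2 * (1 - s / (V + b * s / 3) * b / 3))) = -L := by
  have h1 : 1 - s / (V + b * s / 3) * b / 3 = V / (V + b * s / 3) := by
    field_simp; ring
  rw [h1]
  field_simp
  linear_combination (-3 : ℝ) * hs2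

lemma bernstein_param_mul_lt {V b s : ℝ} (hV : 0 < V) (hb : 0 ≤ b) (hs : 0 ≤ s) :
    s / (V + b * s / 3) * b < 3 := by
  rw [div_mul_eq_mul_div, div_lt_iff₀ (by positivity)]
  linarith

namespace ProbabilityTheory

variable {Ω : Type*} [MeasurableSpace Ω] {μ : Measure Ω} [IsProbabilityMeasure μ]

lemma integrable_sq_of_ae_abs_le {Y : Ω → ℝ} {b : ℝ} (hY : AEMeasurable Y μ)
    (hbd : ∀ᵐ ω ∂μ, |Y ω| ≤ b) : Integrable (fun ω => Y ω ^ 2) μ :=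
  .of_bound (hY.pow_const 2).aestronglyMeasurable (b ^ 2) <| by
    filter_upwards [hbd] with ω hω
    simpa [sq_abs] using pow_le_pow_left₀ (abs_nonneg _) hω 2

lemma mgf_sub_integral_le {Y : Ω → ℝ} {b t : ℝ} (hY : AEMeasurable Y μ)
    (hbd : ∀ᵐ ω ∂μ, |Y ω| ≤ b) (ht : 0 ≤ t) (htb : t * b < 3) :
    mgf (fun ω => Y ω - μ[Y]) μ t ≤ Real.exp (μ[Y ^ 2] * (t ^ 2 / (2 * (1 - t * b / 3)))) := by
  set c := t ^ 2 / (2 * (1 - t * b / 3))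
  have hYint : Integrable Y μ := .of_bound hY.aestronglyMeasurable b (by simpa using hbd)
  have hY2int := integrable_sq_of_ae_abs_le hY hbd
  have hexpint : Integrable (fun ω => Real.exp (t * Y ω)) μ :=
    integrable_exp_mul_of_le t b ht hY (hbd.mono fun ω hω => (le_abs_self _).trans hω)
  have hpointwise : ∀ᵐ ω ∂μ, Real.exp (t * Y ω) ≤ 1 + t * Y ω + Y ω ^ 2 * c := by
    filter_upwards [hbd] with ω hω
    have htY : |t * Y ω| ≤ t * b := by
      rw [abs_mul, abs_of_nonneg ht]; exact mul_le_mul_of_nonneg_left hω ht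
    have h := Real.exp_sub_one_sub_le_of_abs_le htY htb
    have hc : (t * Y ω) ^ 2 / (2 * (1 - t * b / 3)) = Y ω ^ 2 * c := by ring
    linarith
  have hlin : Integrable (fun ω => 1 + t * Y ω) μ := (integrable_const 1).add (hYint.const_mul t)
  have hmgf : mgf Y μ t ≤ 1 + t * μ[Y] + μ[Y ^ 2] * c := calc
    mgf Y μ t ≤ ∫ ω, 1 + t * Y ω + Y ω ^ 2 * c ∂μ :=
      integral_mono_ae hexpint (hlin.add (hY2int.mul_const c)) hpointwise
    _ = 1 + t * μ[Y] + μ[Y ^ 2] * c := by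
      rw [integral_add hlin (hY2int.mul_const c),
        integral_add (integrable_const 1) (hYint.const_mul t), integral_const_mul,
        integral_mul_const]
      simp
  -- the linear term `t * μ[Y]` is absorbed by `1 + x ≤ exp x`, so `Y` itself need not be centred
  calc mgf (fun ω => Y ω - μ[Y]) μ t = mgf Y μ t * Real.exp (-(t * μ[Y])) := by
        simp_rw [sub_eq_add_neg, mgf_add_const, mul_neg]
  _ ≤ Real.exp (t * μ[Y] + μ[Y ^ 2] * c) * Real.exp (-(t * μ[Y])) := by
        gcongr
        linarith [Real.add_one_le_exp (t * μ[Y] + μ[Y ^ 2] * c)]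
  _ = Real.exp (μ[Y ^ 2] * c) := by rw [← Real.exp_add]; ring_nf

variable {ι : Type*} [Fintype ι] {Y : ι → Ω → ℝ} {b V L : ℝ}

lemma ae_eq_zero_of_sum_integral_sq_nonpos (hmeas : ∀ i, Measurable (Y i))
    (hbd : ∀ i, ∀ᵐ ω ∂μ, |Y i ω| ≤ b) (hvar : ∑ i, μ[Y i ^ 2] ≤ 0) (i : ι) :
    Y i =ᵐ[μ] 0 := by
  have hsq : ∀ j, 0 ≤ μ[Y j ^ 2] := fun j => integral_nonneg fun ω => sq_nonneg _
  have hi : μ[Y i ^ 2] = 0 :=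
    (Finset.sum_eq_zero_iff_of_nonneg fun j _ => hsq j).mp
      (hvar.antisymm (Finset.sum_nonneg fun j _ => hsq j)) i (Finset.mem_univ i)
  filter_upwards [(integral_eq_zero_iff_of_nonneg (fun ω => sq_nonneg (Y i ω))
    (integrable_sq_of_ae_abs_le (hmeas i).aemeasurable (hbd i))).mp hi] with ω hω
  simpa using hω

lemma mgf_sum_sub_integral_le (hindep : iIndepFun Y μ) (hmeas : ∀ i, Measurable (Y i))
    (hbd : ∀ i, ∀ᵐ ω ∂μ, |Y i ω| ≤ b) (hvar : ∑ i, μ[Y i ^ 2] ≤ V) {t : ℝ} (ht : 0 ≤ t)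
    (htb : t * b < 3) :
    mgf (fun ω => ∑ i, (Y i ω - μ[Y i])) μ t ≤
      Real.exp (V * (t ^ 2 / (2 * (1 - t * b / 3)))) := by
  set c := t ^ 2 / (2 * (1 - t * b / 3))
  set Y' : ι → Ω → ℝ := fun i ω => Y i ω - ∫ ω', Y i ω' ∂μ
  have hmeas' : ∀ i, Measurable (Y' i) := fun i => (hmeas i).sub_const _
  have hindep' : iIndepFun Y' μ :=
    hindep.comp (fun i (x : ℝ) => x - ∫ ω', Y i ω' ∂μ) fun i => measurable_sub_const _
  calc mgf (fun ω => ∑ i, Y' i ω) μ t = ∏ i, mgf (Y' i) μ t := by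
        rw [← Finset.sum_fn]; exact hindep'.mgf_sum hmeas' _
    _ ≤ ∏ i, Real.exp (μ[Y i ^ 2] * c) := Finset.prod_le_prod (fun i _ => mgf_nonneg)
        fun i _ => mgf_sub_integral_le (hmeas i).aemeasurable (hbd i) ht htb
    _ = Real.exp ((∑ i, μ[Y i ^ 2]) * c) := by rw [← Real.exp_sum, Finset.sum_mul]
    _ ≤ Real.exp (V * c) :=
        Real.exp_le_exp.mpr (mul_le_mul_of_nonneg_right hvar (div_nonneg (sq_nonneg t)
          (by linarith)))

theorem measure_sum_sub_integral_gt_le (hindep : iIndepFun Y μ) (hmeas : ∀ i, Measurable (Y i))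
    (hb : 0 ≤ b) (hbd : ∀ i, ∀ᵐ ω ∂μ, |Y i ω| ≤ b) (hvar : ∑ i, μ[Y i ^ 2] ≤ V) (hL : 0 ≤ L) :
    μ {ω | √(2 * V * L) + b * L / 3 < ∑ i, (Y i ω - μ[Y i])} ≤
      ENNReal.ofReal (Real.exp (-L)) := by
  set x₀ := √(2 * V * L) + b * L / 3
  set S : Ω → ℝ := fun ω => ∑ i, (Y i ω - μ[Y i])
  rcases le_or_gt V 0 with hV | hV
  · have hzero := ae_eq_zero_of_sum_integral_sq_nonpos hmeas hbd (hvar.trans hV)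
    refine (measure_eq_zero_iff_ae_notMem.mpr ?_).trans_le bot_le
    filter_upwards [ae_all_iff.mpr hzero] with ω hω
    have hx₀ : 0 ≤ x₀ := by positivity
    simp [integral_congr_ae (hzero _), hω, hx₀]
  set s := √(2 * V * L)
  have hs : 0 ≤ s := Real.sqrt_nonneg _
  set t := s / (V + b * s / 3)
  have ht : 0 ≤ t := by positivity
  have htb : t * b < 3 := bernstein_param_mul_lt hV hb hs
  have hint : Integrable (fun ω => Real.exp (t * S ω)) μ := by
    refine integrable_exp_mul_of_le t (∑ i, (b - μ[Y i])) ht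
      (Finset.measurable_sum _ fun i _ => (hmeas i).sub_const _).aemeasurable ?_
    filter_upwards [ae_all_iff.mpr hbd] with ω hω
    exact Finset.sum_le_sum fun i _ => by linarith [le_abs_self (Y i ω), hω i]
  calc μ {ω | x₀ < S ω}
      ≤ μ {ω | x₀ ≤ S ω} := measure_mono (Set.ofPred_subset_ofPred.mpr fun _ => le_of_lt)
    _ = ENNReal.ofReal (μ.real {ω | x₀ ≤ S ω}) := (ofReal_measureReal).symm
    _ ≤ ENNReal.ofReal (Real.exp (-L)) := by
      refine ENNReal.ofReal_le_ofReal ((measure_ge_le_exp_mul_mgf x₀ ht hint).trans ?_)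
      calc Real.exp (-t * x₀) * mgf S μ t
          ≤ Real.exp (-t * x₀) * Real.exp (V * (t ^ 2 / (2 * (1 - t * b / 3)))) := by
            gcongr
            exact mgf_sum_sub_integral_le hindep hmeas hbd hvar ht htb
        _ = Real.exp (-L) := by
          rw [← Real.exp_add]
          exact congrArg Real.exp (bernstein_exponent_eq hV hb hs (Real.sq_sqrt (by positivity)))

theorem ofReal_one_sub_le_measure_abs_sum_sub_integral_le (hindep : iIndepFun Y μ)
    (hmeas : ∀ i, Measurable (Y i)) (hb : 0 ≤ b) (hbd : ∀ i, ∀ᵐ ω ∂μ, |Y i ω| ≤ b)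
    (hvar : ∑ i, μ[Y i ^ 2] ≤ V) (hL : 0 ≤ L) :
    ENNReal.ofReal (1 - 2 * Real.exp (-L)) ≤
      μ {ω | |∑ i, (Y i ω - μ[Y i])| ≤ √(2 * V * L) + b * L / 3} := by
  set x₀ := √(2 * V * L) + b * L / 3
  set S : Ω → ℝ := fun ω => ∑ i, (Y i ω - μ[Y i])
  have hupper : μ {ω | x₀ < S ω} ≤ ENNReal.ofReal (Real.exp (-L)) :=
    measure_sum_sub_integral_gt_le hindep hmeas hb hbd hvar hL
  have hlower : μ {ω | x₀ < -S ω} ≤ ENNReal.ofReal (Real.exp (-L)) := by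
    have h := measure_sum_sub_integral_gt_le (Y := fun i => -Y i)
      (hindep.comp (fun _ x => -x) fun _ => measurable_neg) (fun i => (hmeas i).neg) hb
      (by simpa using hbd) (by simpa using hvar) hL
    simpa [S, integral_neg, ← Finset.sum_neg_distrib, neg_add_eq_sub] using h
  have hcover : Set.univ ⊆ {ω | |S ω| ≤ x₀} ∪ ({ω | x₀ < S ω} ∪ {ω | x₀ < -S ω}) :=
    fun ω _ => by
      rcases le_or_gt |S ω| x₀ with h | h
      · exact Or.inl h
      · exact Or.inr (lt_abs.mp h)
  have htotal : 1 ≤ μ {ω | |S ω| ≤ x₀} + ENNReal.ofReal (2 * Real.exp (-L)) := calc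
    1 = μ Set.univ := measure_univ.symm
    _ ≤ μ {ω | |S ω| ≤ x₀} + (μ {ω | x₀ < S ω} + μ {ω | x₀ < -S ω}) :=
      (measure_mono hcover).trans <|
        (measure_union_le _ _).trans (add_le_add le_rfl (measure_union_le _ _))
    _ ≤ μ {ω | |S ω| ≤ x₀} + ENNReal.ofReal (2 * Real.exp (-L)) := by
      rw [two_mul, ENNReal.ofReal_add (by positivity) (by positivity)]
      gcongr
  rw [ENNReal.ofReal_sub _ (by positivity), ENNReal.ofReal_one]
  exact tsub_le_iff_right.mpr htotal

theorem ofReal_one_sub_le_measure_abs_empiricalMean_sub_integral_le {X : Type*}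
    [MeasurableSpace X] {Q : Measure X} {n : ℕ} (hn : 0 < n) {Xs : Fin n → Ω → X}
    (hXmeas : ∀ i, Measurable (Xs i)) (hid : ∀ i, Measure.map (Xs i) μ = Q)
    (hindep : iIndepFun Xs μ) {Z : X → ℝ} (hZ : Measurable Z) {b v L : ℝ} (hb : 0 ≤ b)
    (hbd : ∀ᵐ x ∂Q, |Z x| ≤ b) (hvar : ∫ x, Z x ^ 2 ∂Q ≤ v) (hL : 0 ≤ L) :
    ENNReal.ofReal (1 - 2 * Real.exp (-L)) ≤
      μ {ω | |(1 / (n : ℝ)) * ∑ i, Z (Xs i ω) - ∫ x, Z x ∂Q| ≤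
        √(2 * v * L / n) + b * L / (3 * n)} := by
  have hn' : (0 : ℝ) < n := Nat.cast_pos.mpr hn
  have hpush : ∀ i (f : X → ℝ), Measurable f → ∫ ω, f (Xs i ω) ∂μ = ∫ x, f x ∂Q := fun i f hf => by
    rw [← hid i, integral_map (hXmeas i).aemeasurable hf.aestronglyMeasurable]
  have hsum := ofReal_one_sub_le_measure_abs_sum_sub_integral_le (V := n * v)
    (hindep.comp (fun _ => Z) fun _ => hZ) (fun i => hZ.comp (hXmeas i)) hb
    (fun i => ae_of_ae_map (hXmeas i).aemeasurable (by rwa [hid i]))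
    (by simpa [Function.comp_def, hpush _ _ (hZ.pow_const 2)] using
      mul_le_mul_of_nonneg_left hvar hn'.le) hL
  refine hsum.trans (measure_mono fun ω hω => ?_)
  simp only [Function.comp_apply, Set.mem_ofPred_eq, hpush _ _ hZ] at hω ⊢
  have hmean : (1 / (n : ℝ)) * ∑ i, Z (Xs i ω) - ∫ x, Z x ∂Q
      = (∑ i, (Z (Xs i ω) - ∫ x, Z x ∂Q)) / n := by
    rw [Finset.sum_sub_distrib, Finset.sum_const, Finset.card_univ, Fintype.card_fin,
      nsmul_eq_mul]
    field_simp
  have hradius : √(2 * v * L / n) + b * L / (3 * n) = (√(2 * (n * v) * L) + b * L / 3) / n := by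
    rw [show 2 * v * L / n = 2 * (n * v) * L / n ^ 2 by field_simp, Real.sqrt_div' _ (sq_nonneg _),
      Real.sqrt_sq hn'.le]
    field_simp
  rw [hmean, hradius, abs_div, abs_of_pos hn']
  exact div_le_div_of_nonneg_right hω hn'.le

end ProbabilityTheory

lemma sub_min_le_rpow_mul_rpow {l τ α : ℝ} (hl : 0 ≤ l) (hτ : 0 < τ) (hα : 1 ≤ α) :
    l - min l τ ≤ τ ^ (1 - α) * l ^ α := by
  rcases le_or_gt l τ with hlτ | hτl
  · rw [min_eq_left hlτ, sub_self]
    positivity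
  calc l - min l τ ≤ l := sub_le_self l (le_min hl hτ.le)
    _ = l ^ (1 - α) * l ^ α := by
      rw [← Real.rpow_add (hτ.trans hτl), sub_add_cancel, Real.rpow_one]
    _ ≤ τ ^ (1 - α) * l ^ α := mul_le_mul_of_nonneg_right
      (Real.rpow_le_rpow_of_nonpos hτ hτl.le (by linarith)) (by positivity)

lemma min_sq_le_rpow_mul_rpow {l τ α : ℝ} (hl : 0 ≤ l) (hτ : 0 ≤ τ) (hα₀ : 0 ≤ α)
    (hα₂ : α ≤ 2) : min l τ ^ 2 ≤ τ ^ (2 - α) * l ^ α := by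
  have hm : 0 ≤ min l τ := le_min hl hτ
  calc min l τ ^ 2 = min l τ ^ (2 - α) * min l τ ^ α := by
        rw [← Real.rpow_add' hm (by norm_num), sub_add_cancel, ← Real.rpow_natCast]
        norm_num
    _ ≤ τ ^ (2 - α) * l ^ α :=
        mul_le_mul (Real.rpow_le_rpow hm (min_le_right l τ) (by linarith))
          (Real.rpow_le_rpow hm (min_le_left l τ) hα₀) (by positivity) (by positivity)

lemma abs_mul_min_le {a l τ M : ℝ} (ha : |a| ≤ M) (hl : 0 ≤ l) (hτ : 0 ≤ τ) :
    |a * min l τ| ≤ M * τ := by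
  rw [abs_mul, abs_of_nonneg (le_min hl hτ)]
  exact mul_le_mul ha (min_le_right l τ) (le_min hl hτ) ((abs_nonneg a).trans ha)

section TruncatedLikelihoodRatio

variable {X : Type*} [MeasurableSpace X]

lemma lr_nonneg (P Q : Measure X) (x : X) : 0 ≤ lr P Q x := ENNReal.toReal_nonneg

lemma measurable_lr (P Q : Measure X) : Measurable (lr P Q) :=
  (Measure.measurable_rnDeriv P Q).ennreal_toReal

variable {P Q : Measure X} {h : X → ℝ} {M τ α : ℝ}

lemma integral_sq_mul_min_lr_le (hM : ∀ᵐ x ∂Q, |h x| ≤ M) (hτ : 0 ≤ τ) (hα₀ : 0 ≤ α)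
    (hα₂ : α ≤ 2) (hI : Integrable (fun x => lr P Q x ^ α) Q) :
    ∫ x, (h x * min (lr P Q x) τ) ^ 2 ∂Q ≤ M ^ 2 * τ ^ (2 - α) * Ialpha P Q α := by
  rw [Ialpha, ← integral_const_mul]
  refine integral_mono_of_nonneg (.of_forall fun x => sq_nonneg _) (hI.const_mul _) ?_
  filter_upwards [hM] with x hx
  have hh2 : h x ^ 2 ≤ M ^ 2 := by
    simpa only [sq_abs] using pow_le_pow_left₀ (abs_nonneg (h x)) hx 2
  rw [mul_pow, mul_assoc]
  exact mul_le_mul hh2 (min_sq_le_rpow_mul_rpow (lr_nonneg P Q x) hτ hα₀ hα₂) (sq_nonneg _)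
    ((sq_nonneg _).trans hh2)

lemma abs_integral_mul_min_lr_sub_integral_le [IsFiniteMeasure P] [SigmaFinite Q] (hPQ : P ≪ Q)
    (hh : AEStronglyMeasurable h Q) (hM : ∀ᵐ x ∂Q, |h x| ≤ M) (hτ : 0 < τ) (hα : 1 ≤ α)
    (hI : Integrable (fun x => lr P Q x ^ α) Q) :
    |∫ x, h x * min (lr P Q x) τ ∂Q - ∫ x, h x ∂P| ≤ M * (τ ^ (1 - α) * Ialpha P Q α) := by
  have hint_lr : Integrable (fun x => h x * lr P Q x) Q :=
    Measure.integrable_toReal_rnDeriv.bdd_mul hh (c := M) (by simpa using hM)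
  have hint_trunc : Integrable (fun x => h x * min (lr P Q x) τ) Q :=
    hint_lr.mono (hh.mul ((measurable_lr P Q).min measurable_const).aestronglyMeasurable) <| by
      refine .of_forall fun x => ?_
      simp only [Real.norm_eq_abs, abs_mul, abs_of_nonneg (lr_nonneg P Q x),
        abs_of_nonneg (le_min (lr_nonneg P Q x) hτ.le)]
      exact mul_le_mul_of_nonneg_left (min_le_left _ _) (abs_nonneg _)
  have hP : ∫ x, h x ∂P = ∫ x, h x * lr P Q x ∂Q := by
    rw [← integral_rnDeriv_smul hPQ]
    simp only [lr, smul_eq_mul, mul_comm]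
  rw [hP, ← integral_sub hint_trunc hint_lr, Ialpha, ← integral_const_mul, ← integral_const_mul]
  refine (abs_integral_le_integral_abs).trans
    (integral_mono_of_nonneg (.of_forall fun x => abs_nonneg _) ((hI.const_mul _).const_mul _) ?_)
  filter_upwards [hM] with x hx
  have htrunc := sub_min_le_rpow_mul_rpow (lr_nonneg P Q x) hτ hα
  rw [← mul_sub, abs_mul, abs_of_nonpos (sub_nonpos.mpr (min_le_left _ _)), neg_sub]
  exact mul_le_mul hx htrunc (sub_nonneg.mpr (min_le_left _ _)) ((abs_nonneg _).trans hx)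

end TruncatedLikelihoodRatio

/-- Bernstein-plus-bias concentration bound for the truncated likelihood-ratio
estimator under the `∞`-norm. -/
theorem truncated_lr_concentration_inftyNorm
    {X : Type*} [MeasurableSpace X] {Ω : Type*} [MeasurableSpace Ω]
    (P Q : Measure X) [IsProbabilityMeasure P] [IsProbabilityMeasure Q]
    (hPQ : P ≪ Q) (h : X → ℝ) (hmeas : Measurable h)
    (hinf : eLpNorm h ⊤ Q < ⊤)
    (α : ℝ) (hα1 : 1 < α) (hα2 : α ≤ 2)
    (hI : Integrable (fun x => lr P Q x ^ α) Q)
    (τ : ℝ) (hτ : 0 < τ)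
    (μ : Measure Ω) [IsProbabilityMeasure μ]
    (n : ℕ) (hn : 0 < n) (Xs : Fin n → Ω → X)
    (hXmeas : ∀ i, Measurable (Xs i))
    (hid : ∀ i, Measure.map (Xs i) μ = Q)
    (hindep : iIndepFun Xs μ)
    (δ : ℝ) (hδ0 : 0 < δ) (hδ1 : δ < 1) :
    ENNReal.ofReal (1 - δ) ≤
      μ {ω | |(1 / (n : ℝ)) * ∑ i, h (Xs i ω) * min (lr P Q (Xs i ω)) τ - ∫ x, h x ∂P| ≤
        (eLpNorm h ⊤ Q).toReal *
          (Real.sqrt (2 * τ ^ (2 - α) * Real.log (2 / δ) * Ialpha P Q α / n)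
            + τ * Real.log (2 / δ) / (3 * n)
            + τ ^ (1 - α) * Ialpha P Q α)} := by
  set M := (eLpNorm h ⊤ Q).toReal
  set L := Real.log (2 / δ)
  set I := Ialpha P Q α
  have hM : ∀ᵐ x ∂Q, |h x| ≤ M := by
    simpa only [M, toReal_eLpNorm hmeas.aestronglyMeasurable, Real.norm_eq_abs] using
      ae_le_lpNorm_exponent_top ⟨hmeas.aestronglyMeasurable, hinf⟩
  have hL : 0 ≤ L := Real.log_nonneg (by rw [le_div_iff₀ hδ0]; linarith)
  have hconc := ofReal_one_sub_le_measure_abs_empiricalMean_sub_integral_le hn hXmeas hid hindep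
    (hmeas.mul ((measurable_lr P Q).min measurable_const)) (by positivity)
    (hM.mono fun x hx => abs_mul_min_le hx (lr_nonneg P Q x) hτ.le)
    (integral_sq_mul_min_lr_le hM hτ.le (by linarith) hα2 hI) hL
  have hδ : 1 - 2 * Real.exp (-L) = 1 - δ := by
    rw [Real.exp_neg, Real.exp_log (by positivity)]
    field_simp
  rw [hδ] at hconc
  refine hconc.trans (measure_mono fun ω hω => ?_)
  have hbias := abs_integral_mul_min_lr_sub_integral_le hPQ hmeas.aestronglyMeasurable hM hτ
    hα1.le hI
  have hsqrt : √(2 * (M ^ 2 * τ ^ (2 - α) * I) * L / n) = M * √(2 * τ ^ (2 - α) * L * I / n) := by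
    rw [show 2 * (M ^ 2 * τ ^ (2 - α) * I) * L / n = M ^ 2 * (2 * τ ^ (2 - α) * L * I / n) by ring,
      Real.sqrt_mul (sq_nonneg M), Real.sqrt_sq (by positivity)]
  calc _ ≤ |(1 / (n : ℝ)) * ∑ i, h (Xs i ω) * min (lr P Q (Xs i ω)) τ
          - ∫ x, h x * min (lr P Q x) τ ∂Q|
        + |∫ x, h x * min (lr P Q x) τ ∂Q - ∫ x, h x ∂P| := abs_sub_le _ _ _
    _ ≤ √(2 * (M ^ 2 * τ ^ (2 - α) * I) * L / n) + M * τ * L / (3 * n)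
        + M * (τ ^ (1 - α) * I) := add_le_add hω hbias
    _ = _ := by rw [hsqrt]; ring
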